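/- arXiv:1801.02245 — 7 statements merged into one kernel-verified Lean document; each statement's English description precedes it below -/
import Mathlib

section
/- Let L be a field with a surjective discrete valuation ν : L* → ℤ, with valuation ring O_L, residue field l, and let K ⊆ L be a subfield with ν(K*) = ℤ, with residue field k. Then trdeg_k(l) ≤ trdeg_K(L). -/
/-!
Lift a transcendence basis of `l/k` to elements `aₓ` of `𝒪_L`. If `p ≠ 0` over `K` vanished at
the `aₓ`, scale it by the inverse of a coefficient of largest valuation: the result has
coefficients in `𝒪_K`, one of them equal to `1`, so its reduction is a nonzero polynomial over
`k` vanishing at the residues of the `aₓ`. Hence the `aₓ` are algebraically independent over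
`K`, and their number is at most `trdeg_K L`.
-/

open MvPolynomial IsLocalRing

namespace Valuation

variable {Γ₀ : Type*} [LinearOrderedCommGroupWithZero Γ₀]

theorem exists_C_mul_eq_map_and_map_residue_ne_zero {K σ : Type*} [Field K]
    (w : Valuation K Γ₀) {p : MvPolynomial σ K} (hp : p ≠ 0) :
    ∃ (c : K) (Q : MvPolynomial σ w.valuationSubring),
      Q.map w.valuationSubring.subtype = C c * p ∧ Q.map (residue _) ≠ 0 := by
  obtain ⟨m₀, hm₀, hmax⟩ := p.support.exists_max_image (fun m => w (p.coeff m))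
    (Finset.nonempty_iff_ne_empty.2 (mt support_eq_empty.1 hp))
  have hc₀ : p.coeff m₀ ≠ 0 := mem_support_iff.1 hm₀
  set c := (p.coeff m₀)⁻¹
  have hint : ∀ m, w (c * p.coeff m) ≤ 1 := by
    intro m
    by_cases hm : m ∈ p.support
    · rw [map_mul, map_inv₀, inv_mul_le_iff₀ (w.pos_iff.2 hc₀), mul_one]
      exact hmax m hm
    · simp [notMem_support_iff.1 hm]
  obtain ⟨Q, hQ⟩ : C c * p ∈ Set.range (MvPolynomial.map w.valuationSubring.subtype) := by
    rw [mem_range_map_iff_coeffs_subset]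
    intro x hx
    obtain ⟨m, -, rfl⟩ := mem_coeffs_iff.1 hx
    rw [coeff_C_mul]
    exact ⟨⟨_, hint m⟩, rfl⟩
  refine ⟨c, Q, hQ, fun h => ?_⟩
  have hQm₀ : Q.coeff m₀ = 1 := Subtype.ext <| by
    simpa [c, coeff_map, coeff_C_mul, hc₀] using congrArg (coeff m₀) hQ
  simpa [coeff_map, hQm₀] using congrArg (coeff m₀) h

variable {L : Type*} [Field L] (v : Valuation L Γ₀) (K : Subfield L)

def comapValuationSubringHom :
    (v.comap K.subtype).valuationSubring →+* v.valuationSubring :=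
  (K.subtype.comp (v.comap K.subtype).valuationSubring.subtype).codRestrict _ fun x => x.2

theorem algebraicIndependent_of_algebraicIndependent_residue
    (i : ResidueField (v.comap K.subtype).valuationSubring →+* ResidueField v.valuationSubring)
    (hi : ∀ (x : (v.comap K.subtype).valuationSubring) (y : v.valuationSubring),
      ((x : K) : L) = (y : L) → i (residue _ x) = residue _ y)
    {ι : Type*} {a : ι → v.valuationSubring}
    (ha : letI := i.toAlgebra
      AlgebraicIndependent (ResidueField (v.comap K.subtype).valuationSubring)
        fun x => residue _ (a x)) :
    AlgebraicIndependent K fun x => (a x : L) := by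
  let := i.toAlgebra
  rw [algebraicIndependent_iff] at ha ⊢
  intro p hp
  by_contra hp₀
  obtain ⟨c, Q, hQ, hQres⟩ :=
    (v.comap K.subtype).exists_C_mul_eq_map_and_map_residue_ne_zero hp₀
  set g := comapValuationSubringHom v K
  have hQa : eval₂ g a Q = 0 := Subtype.ext <| by
    calc ((eval₂ g a Q : v.valuationSubring) : L)
        = aeval (fun x => (a x : L)) (Q.map (v.comap K.subtype).valuationSubring.subtype) := by
          rw [aeval_def, eval₂_map]
          exact eval₂_comp_left v.valuationSubring.subtype g a Q
      _ = 0 := by rw [hQ, map_mul, hp, mul_zero]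
  refine hQres (ha _ ?_)
  have hres : (residue _).comp g = i.comp (residue _) :=
    RingHom.ext fun x => (hi x (g x) rfl).symm
  rw [aeval_def, RingHom.algebraMap_toAlgebra, eval₂_map, ← hres]
  exact (eval₂_comp_left (residue _) g a Q).symm.trans (by rw [hQa, map_zero])

end Valuation

theorem stmt0_general (L : Type*) [Field L]
    (v : Valuation L (WithZero (Multiplicative ℤ)))
    (K : Subfield L)
    (i : IsLocalRing.ResidueField (v.comap K.subtype).valuationSubring →+*
         IsLocalRing.ResidueField v.valuationSubring)
    (hi : ∀ (x : (v.comap K.subtype).valuationSubring) (y : v.valuationSubring),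
      ((x : K) : L) = (y : L) →
        i (IsLocalRing.residue _ x) = IsLocalRing.residue _ y)
    (s : Set (IsLocalRing.ResidueField v.valuationSubring))
    (t : Set L)
    (hs : letI := i.toAlgebra
      IsTranscendenceBasis (IsLocalRing.ResidueField (v.comap K.subtype).valuationSubring)
        ((↑) : s → IsLocalRing.ResidueField v.valuationSubring))
    (ht : IsTranscendenceBasis K ((↑) : t → L)) :
    Cardinal.mk s ≤ Cardinal.mk t := by
  let := i.toAlgebra
  choose a ha using fun x : s => residue_surjective (x : ResidueField v.valuationSubring)
  have hindep : AlgebraicIndependent K fun x => (a x : L) :=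
    v.algebraicIndependent_of_algebraicIndependent_residue K i hi <| by
      simpa only [ha] using hs.1
  exact ht.cardinalMk_eq_trdeg ▸ hindep.cardinalMk_le_trdeg

/-- If `ν` is a surjective discrete valuation on a field `L` and `K ⊆ L`
is a subfield with `ν(K*) = ℤ`, then the transcendence degree of the residue field
extension `l/k` is at most the transcendence degree of `L/K`. Transcendence degrees
are compared via (arbitrary) transcendence bases. -/
theorem stmt0 (L : Type*) [Field L]
    (v : Valuation L (WithZero (Multiplicative ℤ)))
    (hv : Function.Surjective v)
    (K : Subfield L)
    (hK : Function.Surjective (v.comap K.subtype))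
    (i : IsLocalRing.ResidueField (v.comap K.subtype).valuationSubring →+*
         IsLocalRing.ResidueField v.valuationSubring)
    (hi : ∀ (x : (v.comap K.subtype).valuationSubring) (y : v.valuationSubring),
      ((x : K) : L) = (y : L) →
        i (IsLocalRing.residue _ x) = IsLocalRing.residue _ y)
    (s : Set (IsLocalRing.ResidueField v.valuationSubring))
    (t : Set L)
    (hs : letI := i.toAlgebra
      IsTranscendenceBasis (IsLocalRing.ResidueField (v.comap K.subtype).valuationSubring)
        ((↑) : s → IsLocalRing.ResidueField v.valuationSubring))
    (ht : IsTranscendenceBasis K ((↑) : t → L)) :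
    Cardinal.mk s ≤ Cardinal.mk t :=
  stmt0_general L v K i hi s t hs ht
end

section
/- Let L be a field with a surjective discrete valuation ν, residue field l of characteristic 0, and let g be an automorphism of L of finite order preserving ν. If g induces the identity on L_{≥0}/L_{≥1} and on L_{≥1}/L_{≥2}, then g is the identity automorphism of L. -/
/-!
Write `c = exp (-1)` for the valuation of a uniformizer `π`. The hypotheses say that
`v (g x - x) ≤ c * v x` for units `x` of the valuation ring and for `x = π`; since the elements
with this property form a multiplicative group, it holds for all `x`. Iterating, with
`y = g x - x` one gets `v (g^k x - x - k y) ≤ c * v y` for every `k`. For `k` the order of `g`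
this reads `v (k y) ≤ c * v y`, and `v k = 1` because the residue characteristic is `0`;
hence `y = 0`.
-/

open WithZero

theorem WithZero.exp_neg_one_lt_one : exp (-1 : ℤ) < 1 :=
  (exp_lt_exp.2 neg_one_lt_zero).trans_eq exp_zero

namespace Valuation

section Ring

variable {R Γ₀ : Type*} [Ring R] [LinearOrderedCommMonoidWithZero Γ₀] (v : Valuation R Γ₀)
  {g : R ≃+* R} {c : Γ₀}

theorem map_pow_apply_sub_le (hc : c ≤ 1) (hg : ∀ x, v (g x - x) ≤ c * v x) (k : ℕ) (x : R) :
    v ((g ^ k) x - x) ≤ c * v x := by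
  induction k with
  | zero => simp
  | succ k ih =>
    set w := (g ^ k) x
    have hw : v w ≤ v x :=
      calc v w = v (x + (w - x)) := by rw [add_sub_cancel]
        _ ≤ max (v x) (c * v x) := v.map_add_le (le_max_left _ _) (ih.trans (le_max_right _ _))
        _ = v x := max_eq_left (mul_le_of_le_one_left' hc)
    calc v ((g ^ (k + 1)) x - x) = v ((g w - w) + (w - x)) := by
          rw [pow_succ', RingAut.mul_apply, sub_add_sub_cancel]
      _ ≤ c * v x := v.map_add_le ((hg w).trans (mul_le_mul_right hw c)) ih

theorem map_pow_apply_sub_sub_nsmul_le (hc : c ≤ 1) (hg : ∀ x, v (g x - x) ≤ c * v x)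
    (k : ℕ) (x : R) : v ((g ^ k) x - x - k • (g x - x)) ≤ c * v (g x - x) := by
  induction k with
  | zero => simp
  | succ k ih =>
    have hsplit : (g ^ (k + 1)) x - x - (k + 1) • (g x - x)
        = ((g ^ k) x - x - k • (g x - x)) + ((g ^ k) (g x - x) - (g x - x)) := by
      rw [pow_succ, RingAut.mul_apply, _root_.map_sub, succ_nsmul]
      abel
    rw [hsplit]
    exact v.map_add_le ih (v.map_pow_apply_sub_le hc hg k _)

end Ring

section Field

variable {K Γ₀ : Type*} [Field K] [LinearOrderedCommGroupWithZero Γ₀] (v : Valuation K Γ₀)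
  {g : K ≃+* K} {c : Γ₀}

theorem map_natCast_eq_one [CharZero (IsLocalRing.ResidueField v.valuationSubring)] {n : ℕ}
    (hn : n ≠ 0) : v n = 1 := by
  have hunit : IsUnit (n : v.valuationSubring) := by
    rw [← IsLocalRing.residue_ne_zero_iff_isUnit, map_natCast]
    exact_mod_cast hn
  rw [ValuationSubring.valuation_eq_one_iff] at hunit
  simpa using v.isEquiv_valuation_valuationSubring.eq_one_iff_eq_one.2 hunit

theorem eq_refl_of_map_sub_le (hc : c < 1) (hord : v (orderOf g : K) = 1)
    (hg : ∀ x, v (g x - x) ≤ c * v x) : g = RingEquiv.refl K := by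
  ext x
  have hle := v.map_pow_apply_sub_sub_nsmul_le hc.le hg (orderOf g) x
  rw [pow_orderOf_eq_one, RingAut.one_apply, sub_self, zero_sub, map_neg, nsmul_eq_mul,
    map_mul, hord, one_mul] at hle
  by_contra hne
  have hpos : 0 < v (g x - x) := v.pos_iff.2 (sub_ne_zero.2 hne)
  exact (mul_lt_of_lt_one_left hpos hc).not_ge hle

theorem map_apply_eq_of_map_sub_le (hc : c < 1) {x : K} (hx : v (g x - x) ≤ c * v x) :
    v (g x) = v x := by
  rcases eq_or_ne x 0 with rfl | hx0
  · simp
  exact v.map_eq_of_sub_lt (hx.trans_lt (mul_lt_of_lt_one_left (v.pos_iff.2 hx0) hc))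

def displacementSubgroup (g : K ≃+* K) (hc : c < 1) : Subgroup Kˣ where
  carrier := {x | v (g x - x) ≤ c * v x}
  one_mem' := by simp
  mul_mem' {x y} hx hy := by
    have hgy := v.map_apply_eq_of_map_sub_le hc hy
    calc v (g ↑(x * y) - ↑(x * y)) = v ((g x - x) * g y + x * (g y - y)) := by
          push_cast
          rw [map_mul]
          ring_nf
      _ ≤ c * v ↑(x * y) := by
          rw [Units.val_mul, map_mul]
          refine v.map_add_le ?_ ?_
          · rw [map_mul, hgy, ← mul_assoc]
            exact mul_le_mul_left hx _
          · rw [map_mul, mul_left_comm]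
            exact mul_le_mul_right hy _
  inv_mem' {x} hx := by
    have hgx := v.map_apply_eq_of_map_sub_le hc hx
    have hgx0 : g x ≠ 0 := by simp
    calc v (g ↑x⁻¹ - ↑x⁻¹) = v (g x - x) / (v x * v x) := by
          rw [Units.val_inv_eq_inv_val, map_inv₀, inv_sub_inv hgx0 x.ne_zero, map_div₀, map_mul,
            hgx, v.map_sub_swap]
      _ ≤ c * v x / (v x * v x) := div_le_div_of_nonneg_right hx zero_le
      _ = c * v ↑x⁻¹ := by
          rw [Units.val_inv_eq_inv_val, map_inv₀,
            mul_div_mul_right _ _ (v.ne_zero_iff.2 x.ne_zero), div_eq_mul_inv]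

theorem mem_displacementSubgroup (hc : c < 1) {x : Kˣ} :
    x ∈ v.displacementSubgroup g hc ↔ v (g x - x) ≤ c * v x := Iff.rfl

end Field

theorem map_sub_le_exp_neg_one_mul {K : Type*} [Field K] (v : Valuation K ℤᵐ⁰)
    (hv : Function.Surjective v) {g : K ≃+* K} (h1 : ∀ x, v x ≤ 1 → v (g x - x) ≤ exp (-1))
    (h2 : ∀ x, v x ≤ exp (-1) → v (g x - x) ≤ exp (-2)) (x : K) :
    v (g x - x) ≤ exp (-1) * v x := by
  rcases eq_or_ne x 0 with rfl | hx
  · simp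
  obtain ⟨π, hπ⟩ := hv (exp (-1))
  have hπ0 : π ≠ 0 := v.ne_zero_iff.1 (hπ ▸ exp_ne_zero)
  set m := -log (v x)
  have hπm : v (π ^ m) = v x := by
    rw [map_zpow₀, hπ, ← exp_zsmul, smul_neg, zsmul_one, Int.cast_id, neg_neg,
      exp_log (by simpa)]
  have hπm0 : π ^ m ≠ 0 := zpow_ne_zero m hπ0
  have hu : v (x / π ^ m) = 1 := by rw [map_div₀, hπm, div_self (by simpa)]
  have hxu : Units.mk0 x hx
      = Units.mk0 (x / π ^ m) (div_ne_zero hx hπm0) * Units.mk0 π hπ0 ^ m := by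
    ext
    simp [hπm0]
  have hmem : Units.mk0 x hx ∈ v.displacementSubgroup g exp_neg_one_lt_one := by
    rw [hxu]
    refine Subgroup.mul_mem _ ?_ (Subgroup.zpow_mem _ ?_ m)
    · rw [v.mem_displacementSubgroup, Units.val_mk0, hu, mul_one]
      exact h1 _ hu.le
    · rw [v.mem_displacementSubgroup, Units.val_mk0, hπ, ← exp_add]
      exact h2 π hπ.le
  exact hmem

end Valuation

theorem stmt1_general (L : Type*) [Field L]
    (v : Valuation L (WithZero (Multiplicative ℤ)))
    (hv : Function.Surjective v)
    [CharZero (IsLocalRing.ResidueField v.valuationSubring)]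
    (g : L ≃+* L)
    (hfin : IsOfFinOrder g)
    (h1 : ∀ x : L, v x ≤ 1 →
      v (g x - x) ≤ ((Multiplicative.ofAdd (-1 : ℤ) : Multiplicative ℤ) :
        WithZero (Multiplicative ℤ)))
    (h2 : ∀ x : L, v x ≤ ((Multiplicative.ofAdd (-1 : ℤ) : Multiplicative ℤ) :
        WithZero (Multiplicative ℤ)) →
      v (g x - x) ≤ ((Multiplicative.ofAdd (-2 : ℤ) : Multiplicative ℤ) :
        WithZero (Multiplicative ℤ))) :
    g = RingEquiv.refl L :=
  v.eq_refl_of_map_sub_le exp_neg_one_lt_one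
    (v.map_natCast_eq_one hfin.orderOf_pos.ne') (v.map_sub_le_exp_neg_one_mul hv h1 h2)

/-- if the residue field of a surjective discrete valuation on `L` has
characteristic `0`, and `g` is a valuation-preserving field automorphism of `L`
of finite order inducing the identity on `L_{≥0}/L_{≥1}` and on `L_{≥1}/L_{≥2}`,
then `g` is the identity. -/
theorem stmt1 (L : Type*) [Field L]
    (v : Valuation L (WithZero (Multiplicative ℤ)))
    (hv : Function.Surjective v)
    [CharZero (IsLocalRing.ResidueField v.valuationSubring)]
    (g : L ≃+* L)
    (hfin : IsOfFinOrder g)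
    (hpres : ∀ x : L, v (g x) = v x)
    (h1 : ∀ x : L, v x ≤ 1 →
      v (g x - x) ≤ ((Multiplicative.ofAdd (-1 : ℤ) : Multiplicative ℤ) :
        WithZero (Multiplicative ℤ)))
    (h2 : ∀ x : L, v x ≤ ((Multiplicative.ofAdd (-1 : ℤ) : Multiplicative ℤ) :
        WithZero (Multiplicative ℤ)) →
      v (g x - x) ≤ ((Multiplicative.ofAdd (-2 : ℤ) : Multiplicative ℤ) :
        WithZero (Multiplicative ℤ))) :
    g = RingEquiv.refl L :=
  stmt1_general L v hv g hfin h1 h2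
end

section
/- Let L be a field with a surjective discrete valuation ν, residue field l of characteristic p > 0, and let g be an automorphism of L of finite order d preserving ν. If g induces the identity on L_{≥0}/L_{≥1} and on L_{≥1}/L_{≥2}, then d is a power of p. -/
/-!
The hypotheses say that `g` moves a unit `u` by less than `v u` and a uniformizer `π` by less
than `v π`. Elements `x` with `v (g x - x) < v x` form a subgroup of `Lˣ`, since this inequality
forces `v (g x) = v x`; hence it holds for every `x ≠ 0`, and then for every power of `g`.
If moreover `g ^ n = 1` with `p ∤ n`, then `v n = 1`, and for `z = g x - x` the telescoping sum
`∑_{j < n} g^j z = g^n x - x = 0` is congruent to `n z`, which has valuation `v z`; so `z = 0`.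
Writing `d = p^e m` with `p ∤ m` and applying this to `g ^ p^e` gives `d ∣ p^e`.
-/

open WithZero

namespace Valuation

variable {K : Type*} [Field K]

section

variable {Γ₀ : Type*} [LinearOrderedCommGroupWithZero Γ₀] (v : Valuation K Γ₀)

def smallDisplacementUnits (g : K ≃+* K) : Subgroup Kˣ where
  carrier := {u | v (g u - u) < v u}
  one_mem' := by simp
  mul_mem' := by
    intro a b (ha : v (g a - a) < v a) (hb : v (g b - b) < v b)
    have hga : v (g a) = v a := v.map_eq_of_sub_lt ha
    show v (g (a * b : K) - a * b) < v (a * b : K)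
    calc v (g (a * b : K) - a * b) = v (g a * (g b - b) + (g a - a) * b) := by
          rw [map_mul]; congr 1; ring
      _ < v (a * b : K) := by
          rw [map_mul]
          refine v.map_add_lt ?_ ?_ <;> rw [map_mul]
          · rw [hga]; exact mul_lt_mul_of_pos_left hb (v.pos_iff.2 a.ne_zero)
          · exact mul_lt_mul_of_pos_right ha (v.pos_iff.2 b.ne_zero)
  inv_mem' := by
    intro a (ha : v (g a - a) < v a)
    have hga : v (g a) = v a := v.map_eq_of_sub_lt ha
    have ha0 : 0 < v (a : K) := v.pos_iff.2 a.ne_zero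
    show v (g (a⁻¹ : Kˣ) - (a⁻¹ : Kˣ)) < v ((a⁻¹ : Kˣ) : K)
    have hinv : g (a⁻¹ : Kˣ) - (a⁻¹ : Kˣ) = -(g a - a) * (g a)⁻¹ * (a : K)⁻¹ := by
      rw [Units.val_inv_eq_inv_val, map_inv₀]
      field_simp
      ring
    calc v (g (a⁻¹ : Kˣ) - (a⁻¹ : Kˣ)) = v (g a - a) * (v a)⁻¹ * (v a)⁻¹ := by
          rw [hinv, map_mul, map_mul, map_neg, map_inv₀, map_inv₀, hga]
      _ < v a * (v a)⁻¹ * (v a)⁻¹ := by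
          have := inv_pos.2 ha0
          gcongr
      _ = v ((a⁻¹ : Kˣ) : K) := by
          rw [mul_inv_cancel₀ ha0.ne', one_mul, Units.val_inv_eq_inv_val, map_inv₀]

theorem map_pow_apply_sub_lt {g : K ≃+* K} (hg : ∀ x ≠ 0, v (g x - x) < v x) (n : ℕ) :
    ∀ x ≠ 0, v ((g ^ n) x - x) < v x := by
  induction n with
  | zero => simpa using fun x hx => v.pos_iff.2 hx
  | succ n ih =>
    intro x hx
    have hgx : v (g x) = v x := v.map_eq_of_sub_lt (hg x hx)
    have hsplit : (g ^ (n + 1)) x - x = ((g ^ n) (g x) - g x) + (g x - x) := by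
      rw [pow_succ, RingAut.mul_apply]; ring
    rw [hsplit]
    exact v.map_add_lt (hgx ▸ ih (g x) (by simpa using hx)) (hg x hx)

theorem eq_one_of_pow_eq_one {g : K ≃+* K} (hg : ∀ x ≠ 0, v (g x - x) < v x) {n : ℕ}
    (hgn : g ^ n = 1) (hn : v (n : K) = 1) : g = 1 := by
  ext x
  by_contra hx
  set z := g x - x
  have hz : z ≠ 0 := sub_ne_zero.2 hx
  have htele : ∑ j ∈ Finset.range n, (g ^ j) z = 0 := by
    have hterm : ∀ j, (g ^ j) z = (g ^ (j + 1)) x - (g ^ j) x := fun j => by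
      rw [pow_succ, RingAut.mul_apply, _root_.map_sub]
    rw [Finset.sum_congr rfl fun j _ => hterm j, Finset.sum_range_sub (fun j => (g ^ j) x), hgn,
      pow_zero, sub_self]
  have hsplit : ∑ j ∈ Finset.range n, (g ^ j) z =
      n * z + ∑ j ∈ Finset.range n, ((g ^ j) z - z) := by
    rw [Finset.sum_sub_distrib, Finset.sum_const, Finset.card_range, nsmul_eq_mul]; ring
  have hnz : v (n * z) = v z := by rw [map_mul, hn, one_mul]
  have hrest : v (∑ j ∈ Finset.range n, ((g ^ j) z - z)) < v (n * z) :=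
    hnz ▸ v.map_sum_lt (v.ne_zero_iff.2 hz) fun j _ => v.map_pow_apply_sub_lt hg j z hz
  have := v.map_add_eq_of_lt_left hrest
  rw [← hsplit, htele, map_zero, hnz] at this
  exact hz (v.zero_iff.1 this.symm)

theorem map_natCast_eq_one_of_not_dvd (p : ℕ)
    [CharP (IsLocalRing.ResidueField v.valuationSubring) p] {n : ℕ} (hn : ¬ p ∣ n) : v (n : K) = 1 := by
  have hres : IsLocalRing.residue v.valuationSubring n ≠ 0 := by
    rwa [map_natCast, ne_eq, CharP.cast_eq_zero_iff _ p]
  rw [ne_eq, IsLocalRing.residue_eq_zero_iff, Valuation.mem_maximalIdeal_iff, not_lt] at hres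
  exact le_antisymm (n : v.valuationSubring).2 (by simpa using hres)

end

theorem mem_smallDisplacementUnits_of_surjective (v : Valuation K ℤᵐ⁰)
    (hv : Function.Surjective v) {g : K ≃+* K}
    (h1 : ∀ x : K, v x ≤ 1 → v (g x - x) ≤ exp (-1))
    (h2 : ∀ x : K, v x ≤ exp (-1) → v (g x - x) ≤ exp (-2)) (u : Kˣ) :
    u ∈ v.smallDisplacementUnits g := by
  obtain ⟨π, hπ⟩ := hv (exp (-1))
  have hπ0 : π ≠ 0 := v.ne_zero_iff.1 (hπ ▸ exp_ne_zero)
  have hπS : Units.mk0 π hπ0 ∈ v.smallDisplacementUnits g := by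
    show v (g π - π) < v π
    exact hπ ▸ (h2 π hπ.le).trans_lt (exp_lt_exp.2 (by norm_num))
  have hunitS : ∀ w : Kˣ, v w = 1 → w ∈ v.smallDisplacementUnits g := fun w hw => by
    show v (g w - w) < v w
    exact hw ▸ (h1 w hw.le).trans_lt (exp_lt_exp.2 (by norm_num))
  set n := -log (v u)
  have hvπn : v ((Units.mk0 π hπ0 ^ n : Kˣ) : K) = v u := by
    rw [Units.val_zpow_eq_zpow_val, map_zpow₀, Units.val_mk0, hπ, ← exp_zsmul, smul_neg,
      smul_eq_mul, mul_one, neg_neg, exp_log (v.ne_zero_iff.2 u.ne_zero)]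
  have hw : v ((u * (Units.mk0 π hπ0 ^ n)⁻¹ : Kˣ) : K) = 1 := by
    rw [Units.val_mul, Units.val_inv_eq_inv_val, map_mul, map_inv₀, hvπn,
      mul_inv_cancel₀ (v.ne_zero_iff.2 u.ne_zero)]
  simpa using (v.smallDisplacementUnits g).mul_mem (hunitS _ hw)
    ((v.smallDisplacementUnits g).zpow_mem hπS n)

end Valuation

theorem stmt2_general (L : Type*) [Field L]
    (v : Valuation L (WithZero (Multiplicative ℤ)))
    (hv : Function.Surjective v)
    (p : ℕ) (hp : p.Prime)
    [CharP (IsLocalRing.ResidueField v.valuationSubring) p]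
    (g : L ≃+* L) (d : ℕ) (hd : 0 < d)
    (hord : orderOf g = d)
    (h1 : ∀ x : L, v x ≤ 1 →
      v (g x - x) ≤ ((Multiplicative.ofAdd (-1 : ℤ) : Multiplicative ℤ) :
        WithZero (Multiplicative ℤ)))
    (h2 : ∀ x : L, v x ≤ ((Multiplicative.ofAdd (-1 : ℤ) : Multiplicative ℤ) :
        WithZero (Multiplicative ℤ)) →
      v (g x - x) ≤ ((Multiplicative.ofAdd (-2 : ℤ) : Multiplicative ℤ) :
        WithZero (Multiplicative ℤ))) :
    ∃ m : ℕ, d = p ^ m := by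
  have hg : ∀ x ≠ 0, v (g x - x) < v x := fun x hx =>
    v.mem_smallDisplacementUnits_of_surjective hv h1 h2 (Units.mk0 x hx)
  obtain ⟨e, m, hpm, hdm⟩ := Nat.exists_eq_pow_mul_and_not_dvd hd.ne' p hp.ne_one
  have hpe : g ^ p ^ e = 1 := by
    refine v.eq_one_of_pow_eq_one (v.map_pow_apply_sub_lt hg _) ?_
      (v.map_natCast_eq_one_of_not_dvd p hpm)
    rw [← pow_mul, ← hdm, ← hord, pow_orderOf_eq_one]
  obtain ⟨k, -, hk⟩ := (Nat.dvd_prime_pow hp).1 (hord ▸ orderOf_dvd_of_pow_eq_one hpe)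
  exact ⟨k, hk⟩

/-- if the residue field of a surjective discrete valuation on `L` has
characteristic `p > 0`, and `g` is a valuation-preserving field automorphism of `L`
of finite order `d` inducing the identity on `L_{≥0}/L_{≥1}` and on `L_{≥1}/L_{≥2}`,
then `d` is a power of `p`. -/
theorem stmt2 (L : Type*) [Field L]
    (v : Valuation L (WithZero (Multiplicative ℤ)))
    (hv : Function.Surjective v)
    (p : ℕ) (hp : p.Prime)
    [CharP (IsLocalRing.ResidueField v.valuationSubring) p]
    (g : L ≃+* L) (d : ℕ) (hd : 0 < d)
    (hord : orderOf g = d)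
    (hpres : ∀ x : L, v (g x) = v x)
    (h1 : ∀ x : L, v x ≤ 1 →
      v (g x - x) ≤ ((Multiplicative.ofAdd (-1 : ℤ) : Multiplicative ℤ) :
        WithZero (Multiplicative ℤ)))
    (h2 : ∀ x : L, v x ≤ ((Multiplicative.ofAdd (-1 : ℤ) : Multiplicative ℤ) :
        WithZero (Multiplicative ℤ)) →
      v (g x - x) ≤ ((Multiplicative.ofAdd (-2 : ℤ) : Multiplicative ℤ) :
        WithZero (Multiplicative ℤ))) :
    ∃ m : ℕ, d = p ^ m :=
  stmt2_general L v hv p hp g d hd hord h1 h2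
end

section
/- Let L be a field with a surjective discrete valuation ν, and K ⊆ L a subfield with ν(K*) = ℤ whose residue field k has characteristic 0. Suppose a finite group G acts faithfully on L by field automorphisms preserving ν and fixing K pointwise. Then the induced action of G on the residue field l of L is also faithful. -/
/-! Write `ν` additively. If `σ ≠ 1` acts trivially on the residue field, then dividing by an
element of `K` of the same valuation (which `σ` fixes) shows `ν(σz - z) > ν(z)` for every
`z ≠ 0`. For `y = σx - x ≠ 0` the orbit sum `∑_{i<m} σⁱ y` telescopes to `0`, where `m` is the
order of `σ`; but it is `m·y` plus terms of valuation `> ν(y)`, and `ν(m) = 0` because the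
residue field of `K` has characteristic zero. -/

theorem RingEquiv.sum_pow_apply_sub_eq_zero {R : Type*} [Ring R] {τ : R ≃+* R} {m : ℕ}
    (hm : τ ^ m = 1) (x : R) : ∑ i ∈ Finset.range m, (τ ^ i) (τ x - x) = 0 := by
  have htel : ∀ i, (τ ^ i) (τ x - x) = (τ ^ (i + 1)) x - (τ ^ i) x := fun i => by
    rw [map_sub, pow_succ, RingAut.mul_apply]
  simp_rw [htel]
  rw [Finset.sum_range_sub (fun i => (τ ^ i) x), hm]
  simp

namespace Valuation

variable {Γ₀ : Type*} [LinearOrderedCommGroupWithZero Γ₀]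

theorem map_natCast_eq_one_of_charZero_residueField {F : Type*} [Field F] (w : Valuation F Γ₀)
    [CharZero (IsLocalRing.ResidueField w.valuationSubring)] {n : ℕ} (hn : n ≠ 0) :
    w n = 1 := by
  have hres : IsLocalRing.residue w.valuationSubring n ≠ 0 := by
    rw [map_natCast]; exact_mod_cast hn
  simpa using (valuationSubring.integers w).one_of_isUnit
    ((IsLocalRing.residue_ne_zero_iff_isUnit _).mp hres)

variable {L : Type*} [Field L] (v : Valuation L Γ₀)

theorem map_apply_sub_le_mul_of_fixes {K : Subfield L}
    (hK : Function.Surjective (v.comap K.subtype)) {τ : L ≃+* L} (hfix : ∀ x ∈ K, τ x = x)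
    {ε : Γ₀} (htriv : ∀ x, v x ≤ 1 → v (τ x - x) ≤ ε) (z : L) : v (τ z - z) ≤ ε * v z := by
  rcases eq_or_ne z 0 with rfl | hz
  · simp
  obtain ⟨c, hc⟩ := hK (v z)
  replace hc : v (c : L) = v z := hc
  have hvz : v z ≠ 0 := v.ne_zero_iff.mpr hz
  have hquot : v (z / c) ≤ 1 := by rw [map_div₀, hc, div_self hvz]
  have hsub : τ (z / c) - z / c = (τ z - z) / c := by
    rw [map_div₀, hfix c c.2, sub_div]
  have := htriv _ hquot
  rwa [hsub, map_div₀, hc, div_le_iff₀ (zero_lt_iff.mpr hvz)] at this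

theorem map_pow_apply {τ : L ≃+* L} (hτ : ∀ x, v (τ x) = v x) (i : ℕ) (x : L) :
    v ((τ ^ i) x) = v x := by
  induction i with
  | zero => rfl
  | succ i ih => rw [pow_succ', RingAut.mul_apply, hτ, ih]

theorem map_pow_apply_sub_le_s3 {τ : L ≃+* L} (hτ : ∀ x, v (τ x) = v x) (i : ℕ) (y : L) :
    v ((τ ^ i) y - y) ≤ v (τ y - y) := by
  induction i with
  | zero => simp
  | succ i ih =>
    have hsplit : (τ ^ (i + 1)) y - y = (τ ^ i) (τ y - y) + ((τ ^ i) y - y) := by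
      rw [pow_succ, RingAut.mul_apply, _root_.map_sub]; ring
    rw [hsplit]
    exact (v.map_add _ _).trans (max_le (v.map_pow_apply hτ i _).le ih)

theorem eq_one_of_map_apply_sub_lt {τ : L ≃+* L} (hτ : IsOfFinOrder τ)
    (hpres : ∀ x, v (τ x) = v x)
    (hnat : ∀ n : ℕ, n ≠ 0 → v n = 1) (hlt : ∀ z ≠ 0, v (τ z - z) < v z) : τ = 1 := by
  by_contra hne
  obtain ⟨x, hx⟩ : ∃ x, τ x ≠ x := by
    by_contra! h
    exact hne (RingEquiv.ext h)
  set y := τ x - x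
  have hy : y ≠ 0 := sub_ne_zero.mpr hx
  have hvy : v y ≠ 0 := v.ne_zero_iff.mpr hy
  set m := orderOf τ
  have hsum : ∑ i ∈ Finset.range m, (τ ^ i) y =
      m * y + ∑ i ∈ Finset.range m, ((τ ^ i) y - y) := by
    rw [Finset.sum_sub_distrib, Finset.sum_const, Finset.card_range, nsmul_eq_mul]; ring
  have hmain : v (m * y) = v y := by rw [map_mul, hnat m hτ.orderOf_pos.ne', one_mul]
  have herr : v (∑ i ∈ Finset.range m, ((τ ^ i) y - y)) < v (m * y) :=
    hmain ▸ v.map_sum_lt hvy fun i _ => (v.map_pow_apply_sub_le_s3 hpres i y).trans_lt (hlt y hy)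
  have := v.map_add_eq_of_lt_left herr
  rw [← hsum, RingEquiv.sum_pow_apply_sub_eq_zero (pow_orderOf_eq_one τ), map_zero, hmain] at this
  exact hvy this.symm

end Valuation

theorem stmt3_general (L : Type*) [Field L]
    (v : Valuation L (WithZero (Multiplicative ℤ)))
    (K : Subfield L)
    (hK : Function.Surjective (v.comap K.subtype))
    [CharZero (IsLocalRing.ResidueField (v.comap K.subtype).valuationSubring)]
    (G : Type*) [Group G] [Finite G]
    (φ : G →* (L ≃+* L))
    (hfaith : Function.Injective φ)
    (hpres : ∀ (σ : G) (x : L), v (φ σ x) = v x)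
    (hfix : ∀ (σ : G), ∀ x ∈ K, φ σ x = x) :
    ∀ σ : G, (∀ x : L, v x ≤ 1 →
        v (φ σ x - x) ≤ ((Multiplicative.ofAdd (-1 : ℤ) : Multiplicative ℤ) :
          WithZero (Multiplicative ℤ))) → σ = 1 := by
  intro σ hσ
  have hlt : ∀ z ≠ 0, v (φ σ z - z) < v z := fun z hz =>
    (v.map_apply_sub_le_mul_of_fixes hK (hfix σ) hσ z).trans_lt
      (mul_lt_of_lt_one_left (zero_lt_iff.mpr (v.ne_zero_iff.mpr hz)) (by norm_cast))
  have hnat : ∀ n : ℕ, n ≠ 0 → v n = 1 := fun n hn => by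
    simpa using (v.comap K.subtype).map_natCast_eq_one_of_charZero_residueField hn
  have hfin : IsOfFinOrder (φ σ) := φ.isOfFinOrder (isOfFinOrder_of_finite σ)
  exact hfaith (by rw [v.eq_one_of_map_apply_sub_lt hfin (hpres σ) hnat hlt, map_one])

/-- if a finite group `G` acts faithfully on `L` by automorphisms
preserving a surjective discrete valuation `ν` and fixing pointwise a subfield `K`
with `ν(K*) = ℤ` whose residue field has characteristic `0`, then the induced action
of `G` on the residue field of `L` is faithful: any element acting trivially on the
residue field (i.e. with `ν(σ(x) - x) ≥ 1` for all `x` in the valuation ring)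
is the identity. -/
theorem stmt3 (L : Type*) [Field L]
    (v : Valuation L (WithZero (Multiplicative ℤ)))
    (hv : Function.Surjective v)
    (K : Subfield L)
    (hK : Function.Surjective (v.comap K.subtype))
    [CharZero (IsLocalRing.ResidueField (v.comap K.subtype).valuationSubring)]
    (G : Type*) [Group G] [Finite G]
    (φ : G →* (L ≃+* L))
    (hfaith : Function.Injective φ)
    (hpres : ∀ (σ : G) (x : L), v (φ σ x) = v x)
    (hfix : ∀ (σ : G), ∀ x ∈ K, φ σ x = x) :
    ∀ σ : G, (∀ x : L, v x ≤ 1 →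
        v (φ σ x - x) ≤ ((Multiplicative.ofAdd (-1 : ℤ) : Multiplicative ℤ) :
          WithZero (Multiplicative ℤ))) → σ = 1 :=
  stmt3_general L v K hK G φ hfaith hpres hfix
end

section
/- Let L be a field with a surjective discrete valuation ν, and K ⊆ L a subfield with ν(K*) = ℤ whose residue field k has characteristic p > 0. Suppose a finite group G acts faithfully on L by field automorphisms preserving ν and fixing K pointwise. Then the kernel Δ of the induced G-action on the residue field l of L is a p-group. -/
open Multiplicative in
private lemma stmt4_natcast_le_one {L : Type*} [Field L]
    (v : Valuation L (WithZero (Multiplicative ℤ))) (q : ℕ) : v q ≤ 1 := by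
  induction q with
  | zero => simp
  | succ n ih =>
    push_cast
    exact le_trans (v.map_add _ _) (max_le ih (le_of_eq v.map_one))

/-- If each power-difference of `τ` is small, so are differences for powers of `τ`. -/
private lemma stmt4_powdist {L : Type*} [Field L]
    (v : Valuation L (WithZero (Multiplicative ℤ)))
    (τ : L ≃+* L) (hpres : ∀ x, v (τ x) = v x) (c : WithZero (Multiplicative ℤ))
    (hτ : ∀ x, v x ≤ 1 → v (τ x - x) ≤ c) :
    ∀ (j : ℕ) (x : L), v x ≤ 1 → v ((τ ^ j) x - x) ≤ c := by
  intro j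
  induction j with
  | zero =>
    intro x hx
    have h0 : (τ ^ 0) x = x := rfl
    rw [h0, sub_self, v.map_zero]
    exact zero_le'
  | succ n ih =>
    intro x hx
    have h1 : (τ ^ (n + 1)) x - x = ((τ ^ n) (τ x) - τ x) + (τ x - x) := by
      rw [pow_succ]; show (τ ^ n) (τ x) - x = _; ring
    rw [h1]
    refine le_trans (v.map_add _ _) (max_le ?_ (hτ x hx))
    exact ih (τ x) (by rw [hpres]; exact hx)

open Multiplicative in
private lemma stmt4_key {L : Type*} [Field L]
    (v : Valuation L (WithZero (Multiplicative ℤ)))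
    (π : L) (hπ : v π = (↑(ofAdd (-1 : ℤ)) : WithZero (Multiplicative ℤ)))
    (ρ : L ≃+* L) (hpres : ∀ x, v (ρ x) = v x) (hρπ : ρ π = π)
    (q : ℕ) (hqord : ρ ^ q = 1) (hqv : v (q : L) = 1)
    (hΔ : ∀ x, v x ≤ 1 → v (ρ x - x) ≤ (↑(ofAdd (-1 : ℤ)) : WithZero (Multiplicative ℤ))) :
    ∀ x : L, ρ x = x := by
  have hπ0 : π ≠ 0 := by
    intro h; rw [h, v.map_zero] at hπ; exact (WithZero.zero_ne_coe hπ).elim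
  have hq0' : (q : L) ≠ 0 := by
    intro h; rw [h, v.map_zero] at hqv; simp at hqv
  have hπN : ∀ N : ℕ, v (π ^ N) = (↑(ofAdd (-(N : ℤ))) : WithZero (Multiplicative ℤ)) := by
    intro N
    rw [v.map_pow, hπ, ← WithZero.coe_pow]
    congr 1
    rw [← ofAdd_nsmul]
    congr 1
    simp
  -- main induction: differences get arbitrarily small
  have main : ∀ n : ℕ, ∀ x : L, v x ≤ 1 →
      v (ρ x - x) ≤ (↑(ofAdd (-(n + 1 : ℕ) : ℤ)) : WithZero (Multiplicative ℤ)) := by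
    intro n
    induction n with
    | zero => intro x hx; simpa using hΔ x hx
    | succ n ih =>
      intro x hx
      set N : ℕ := n + 1 with hN
      set c : WithZero (Multiplicative ℤ) := (↑(ofAdd (-(N : ℤ))) : WithZero (Multiplicative ℤ))
        with hc
      have ihc : ∀ x : L, v x ≤ 1 → v (ρ x - x) ≤ c := by
        intro x hx; simpa [hc] using ih x hx
      have hpow := stmt4_powdist v ρ hpres c ihc
      set y : L := (q : L)⁻¹ * ∑ j ∈ Finset.range q, (ρ ^ j) x with hy
      have hρsum : ρ (∑ j ∈ Finset.range q, (ρ ^ j) x) = ∑ j ∈ Finset.range q, (ρ ^ j) x := by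
        rw [map_sum]
        have hterm : ∀ j : ℕ, ρ ((ρ ^ j) x) = (ρ ^ (j + 1)) x := by
          intro j; rw [pow_succ']; rfl
        calc (∑ j ∈ Finset.range q, ρ ((ρ ^ j) x))
            = ∑ j ∈ Finset.range q, (ρ ^ (j + 1)) x := by
              exact Finset.sum_congr rfl fun j _ => hterm j
          _ = ∑ j ∈ Finset.range q, (ρ ^ j) x := by
              have h1 := Finset.sum_range_succ' (fun j => (ρ ^ j) x) q
              have h2 := Finset.sum_range_succ (fun j => (ρ ^ j) x) q
              have h3 : (ρ ^ q) x = (ρ ^ 0) x := by rw [hqord, pow_zero]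
              rw [h3] at h2
              have := h1.symm.trans h2
              exact add_right_cancel this
      have hρy : ρ y = y := by
        rw [hy, map_mul, map_inv₀, map_natCast, hρsum]
      have hxy : x - y = (q : L)⁻¹ * ∑ j ∈ Finset.range q, (x - (ρ ^ j) x) := by
        have hsum : ∑ j ∈ Finset.range q, (x - (ρ ^ j) x)
            = (q : L) * x - ∑ j ∈ Finset.range q, (ρ ^ j) x := by
          rw [Finset.sum_sub_distrib, Finset.sum_const, Finset.card_range, nsmul_eq_mul]
        rw [hsum, mul_sub, ← mul_assoc, inv_mul_cancel₀ hq0', one_mul, hy]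
      have hvxy : v (x - y) ≤ c := by
        rw [hxy, v.map_mul, map_inv₀, hqv, inv_one, one_mul]
        refine v.map_sum_le fun j _ => ?_
        rw [Valuation.map_sub_swap]
        exact hpow j x hx
      set η : L := (x - y) / π ^ N with hη
      have hπN0 : v (π ^ N) ≠ 0 := by rw [hπN]; exact WithZero.coe_ne_zero
      have hvη : v η ≤ 1 := by
        rw [hη, Valuation.map_div, hπN, ← hc]
        exact div_le_one_of_le₀ hvxy (by simp)
      have hrw : ρ x - x = π ^ N * (ρ η - η) := by
        have h2 : x - y = π ^ N * η := by
          rw [hη]; field_simp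
        have h1 : ρ x - x = ρ (x - y) - (x - y) := by rw [map_sub, hρy]; ring
        rw [h1, h2, map_mul, map_pow, hρπ]; ring
      have : v (ρ x - x) ≤ (↑(ofAdd (-(N : ℤ))) : WithZero (Multiplicative ℤ))
          * (↑(ofAdd (-1 : ℤ)) : WithZero (Multiplicative ℤ)) := by
        rw [hrw, v.map_mul, hπN]
        exact mul_le_mul_right (hΔ η hvη) _
      refine le_trans this ?_
      rw [← WithZero.coe_mul, ← ofAdd_add, WithZero.coe_le_coe, Multiplicative.ofAdd_le]
      push_cast [hN]
      omega
  -- conclude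
  intro x
  by_contra hne
  -- reduce to the case `v x ≤ 1`
  obtain ⟨z, hz1, hzne⟩ : ∃ z : L, v z ≤ 1 ∧ ρ z ≠ z := by
    rcases le_or_gt (v x) 1 with h | h
    · exact ⟨x, h, hne⟩
    · have hx0 : x ≠ 0 := by
        intro h0; rw [h0, v.map_zero] at h; exact absurd h (by simp)
      refine ⟨x⁻¹, ?_, ?_⟩
      · have hvi : v x⁻¹ = (v x)⁻¹ := map_inv₀ v x
        rw [hvi]
        exact le_of_lt ((inv_lt_one₀ (zero_lt_iff.mpr ((v.ne_zero_iff).mpr hx0))).mpr h)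
      · rw [map_inv₀]
        intro hinv
        exact hne (inv_injective hinv)
  have hd0 : ρ z - z ≠ 0 := sub_ne_zero.mpr hzne
  obtain ⟨γ, hγ⟩ : ∃ γ : Multiplicative ℤ, v (ρ z - z) = ↑γ := by
    rcases WithZero.ne_zero_iff_exists.mp ((v.ne_zero_iff).mpr hd0) with ⟨γ, hγ⟩
    exact ⟨γ, hγ.symm⟩
  set k : ℤ := Multiplicative.toAdd γ with hk
  have hγk : γ = Multiplicative.ofAdd k := rfl
  have hmain := main (-k).toNat z hz1
  rw [hγ, hγk] at hmain
  have hlt : (-((-k).toNat + 1 : ℕ) : ℤ) < k := by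
    have h1 : -k ≤ ((-k).toNat : ℤ) := Int.self_le_toNat _
    push_cast
    omega
  have : (↑(Multiplicative.ofAdd k) : WithZero (Multiplicative ℤ))
      ≤ ↑(Multiplicative.ofAdd (-(((-k).toNat + 1 : ℕ)) : ℤ)) := hmain
  rw [WithZero.coe_le_coe, Multiplicative.ofAdd_le] at this
  omega

set_option maxHeartbeats 1000000 in
/-- if a finite group `G` acts faithfully on `L` by automorphisms
preserving a surjective discrete valuation `ν` and fixing pointwise a subfield `K`
with `ν(K*) = ℤ` whose residue field has characteristic `p > 0`, then the kernel `Δ`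
of the induced action on the residue field of `L` is a `p`-group: every element
acting trivially on the residue field has `p`-power order. -/
theorem stmt4 (L : Type*) [Field L]
    (v : Valuation L (WithZero (Multiplicative ℤ)))
    (hv : Function.Surjective v)
    (K : Subfield L)
    (hK : Function.Surjective (v.comap K.subtype))
    (p : ℕ) (hp : p.Prime)
    [CharP (IsLocalRing.ResidueField (v.comap K.subtype).valuationSubring) p]
    (G : Type*) [Group G] [Finite G]
    (φ : G →* (L ≃+* L))
    (hfaith : Function.Injective φ)
    (hpres : ∀ (σ : G) (x : L), v (φ σ x) = v x)
    (hfix : ∀ (σ : G), ∀ x ∈ K, φ σ x = x) :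
    ∀ σ : G, (∀ x : L, v x ≤ 1 →
        v (φ σ x - x) ≤ ((Multiplicative.ofAdd (-1 : ℤ) : Multiplicative ℤ) :
          WithZero (Multiplicative ℤ))) → ∃ m : ℕ, orderOf σ = p ^ m := by
  intro σ hσ
  -- find a uniformizer inside K
  obtain ⟨a, ha⟩ := hK (↑(Multiplicative.ofAdd (-1 : ℤ)))
  set π : L := (a : L) with hπdef
  have hπK : π ∈ K := a.2
  have hπ : v π = (↑(Multiplicative.ofAdd (-1 : ℤ)) : WithZero (Multiplicative ℤ)) := ha
  -- set up orders
  have hn : 0 < orderOf σ := orderOf_pos σ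
  set n : ℕ := orderOf σ with hndef
  set m : ℕ := n.factorization p with hmdef
  set q : ℕ := n / p ^ m with hqdef
  have hqdvd : p ^ m ∣ n := Nat.ordProj_dvd n p
  have hnfact : p ^ m * q = n := Nat.mul_div_cancel' hqdvd
  have hqnd : ¬ p ∣ q := Nat.not_dvd_ordCompl hp hn.ne'
  have hq0 : 0 < q := Nat.ordCompl_pos p hn.ne'
  -- the candidate wild element
  set ρ : L ≃+* L := φ σ ^ (p ^ m) with hρdef
  have hρφ : ρ = φ (σ ^ (p ^ m)) := by rw [hρdef, map_pow]
  have hρpres : ∀ x, v (ρ x) = v x := by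
    rw [hρφ]; intro x; exact hpres _ x
  have hρπ : ρ π = π := by rw [hρφ]; exact hfix _ π hπK
  have hρord : ρ ^ q = 1 := by
    rw [hρdef, ← pow_mul, hnfact, hndef]
    have : φ σ ^ orderOf σ = φ (σ ^ orderOf σ) := (map_pow φ σ _).symm
    rw [this, pow_orderOf_eq_one, map_one]
  -- q is a unit in the valuation ring, via the residue characteristic
  have hqv : v (q : L) = 1 := by
    set vK := v.comap K.subtype with hvK
    have hle : vK (q : K) ≤ 1 := by
      have := stmt4_natcast_le_one vK q
      simpa using this
    set qO : vK.valuationSubring := (q : vK.valuationSubring) with hqO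
    have hresq : IsLocalRing.residue vK.valuationSubring qO
        = (q : IsLocalRing.ResidueField vK.valuationSubring) := by
      rw [hqO]; exact map_natCast _ q
    have hqres0 : (q : IsLocalRing.ResidueField vK.valuationSubring) ≠ 0 := by
      intro h
      exact hqnd ((CharP.cast_eq_zero_iff _ p q).mp h)
    have hunit : IsUnit qO := by
      by_contra hnu
      have : qO ∈ IsLocalRing.maximalIdeal vK.valuationSubring :=
        (IsLocalRing.mem_maximalIdeal qO).mpr hnu
      exact hqres0 (hresq ▸ (IsLocalRing.residue_eq_zero_iff qO).mpr this)
    have h1 : vK (qO : K) = 1 :=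
      (Valuation.integer.integers vK).isUnit_iff_valuation_eq_one.mp hunit
    have h2 : (qO : K) = (q : K) := by rw [hqO]; push_cast; rfl
    have h3 : vK (q : K) = 1 := by rw [← h2]; exact h1
    have h4 : v ((q : K) : L) = 1 := h3
    simpa using h4
  -- the Δ-condition for ρ
  have hρΔ : ∀ x, v x ≤ 1 →
      v (ρ x - x) ≤ (↑(Multiplicative.ofAdd (-1 : ℤ)) : WithZero (Multiplicative ℤ)) := by
    intro x hx
    exact stmt4_powdist v (φ σ) (hpres σ) _ hσ (p ^ m) x hx
  -- apply the key lemma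
  have hid : ∀ x : L, ρ x = x := stmt4_key v π hπ ρ hρpres hρπ q hρord hqv hρΔ
  have hρ1 : φ (σ ^ (p ^ m)) = 1 := by
    rw [← hρφ]; ext x; exact hid x
  have hσpm : σ ^ (p ^ m) = 1 := hfaith (by rw [hρ1, map_one])
  have hdvd : orderOf σ ∣ p ^ m := orderOf_dvd_of_pow_eq_one hσpm
  obtain ⟨m', _, hm'⟩ := (Nat.dvd_prime_pow hp).mp hdvd
  exact ⟨m', hm'⟩
end

section
/- Let p be a prime, n a positive integer, and m a positive integer such that q = m·p^n + 1 is prime. Let C_{p^n} act on C_q via an injective homomorphism C_{p^n} → Aut(C_q) (which exists since Aut(C_q) is cyclic of order m·p^n), and set G = C_{p^n} ⋉ C_q. Then G has no non-trivial normal p-subgroup, i.e., G is weakly tame at p. -/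
/-- let `q = m * p^n + 1` be prime, `A` cyclic of order `q`, `B` cyclic
of order `p^n`, and let `B` act faithfully on `A`. Then the semidirect product
`G = A ⋊ B` has no non-trivial normal `p`-subgroup, i.e. `G` is weakly tame at `p`. -/
theorem stmt7 (p n m : ℕ) (hp : p.Prime) (hn : 0 < n) (hm : 0 < m)
    (q : ℕ) (hq : q = m * p ^ n + 1) (hqprime : q.Prime)
    (A B : Type*) [Group A] [Group B] [IsCyclic A] [IsCyclic B]
    (hA : Nat.card A = q) (hB : Nat.card B = p ^ n)
    (φ : B →* MulAut A) (hφ : Function.Injective φ) :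
    ∀ N : Subgroup (A ⋊[φ] B), N.Normal → IsPGroup p N → N = ⊥ := by
  intro N hN hNp
  have hpq : Nat.Coprime p q := by
    rw [Nat.Prime.coprime_iff_not_dvd hp]
    intro h
    rw [hq] at h
    have h1 : p ∣ m * p ^ n := Dvd.dvd.mul_left (dvd_pow_self p hn.ne') m
    have h2 : p ∣ 1 := (Nat.dvd_add_right h1).mp h
    exact hp.one_lt.ne' (Nat.dvd_one.mp h2)
  letI : CommGroup A := IsCyclic.commGroup
  -- key: any element of N whose B-component is 1 must be trivial
  have key : ∀ g : A ⋊[φ] B, g ∈ N → g.right = 1 → g = 1 := by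
    intro g hg hgr
    have hg1 : g = SemidirectProduct.inl g.left := by
      ext
      · simp
      · simp [hgr]
    obtain ⟨k, hk⟩ := hNp ⟨g, hg⟩
    have hk' : g ^ p ^ k = 1 := by
      have := congrArg (Subgroup.subtype N) hk
      simpa using this
    have hdvd1 : orderOf g ∣ p ^ k := orderOf_dvd_of_pow_eq_one hk'
    have hdvd2 : orderOf g ∣ q := by
      rw [hg1, orderOf_injective _ SemidirectProduct.inl_injective, ← hA]
      exact orderOf_dvd_natCard _
    have : orderOf g ∣ 1 := Nat.dvd_gcd hdvd1 hdvd2 |>.trans (hpq.pow_left k).dvd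
    rw [Nat.dvd_one, orderOf_eq_one_iff] at this
    exact this
  rw [Subgroup.eq_bot_iff_forall]
  intro x hx
  have hb : x.right = 1 := by
    have hφb : φ x.right = 1 := by
      ext a'
      have hc : x * SemidirectProduct.inl a' * x⁻¹ * (SemidirectProduct.inl a')⁻¹ ∈ N := by
        have := hN.conj_mem x⁻¹ (inv_mem hx) (SemidirectProduct.inl a')
        have h' := mul_mem hx this
        simpa [mul_assoc] using h'
      have hcr : (x * SemidirectProduct.inl a' * x⁻¹ * (SemidirectProduct.inl a')⁻¹).right = 1 := by
        simp
      have hc1 := key _ hc hcr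
      have hcomm : x * SemidirectProduct.inl a' = SemidirectProduct.inl a' * x := by
        have := mul_eq_one_iff_eq_inv.mp hc1
        rw [mul_inv_eq_iff_eq_mul] at this
        simpa [mul_assoc] using this
      have hleft := congrArg SemidirectProduct.left hcomm
      simp only [SemidirectProduct.mul_left, SemidirectProduct.left_inl, map_one] at hleft
      -- hleft : x.left * φ x.right a' = a' * x.left  roughly
      have : x.left * (φ x.right) a' = x.left * a' := by
        simp only [SemidirectProduct.right_inl, map_one, MulAut.one_apply] at hleft
        rw [hleft, mul_comm]
      simpa using mul_left_cancel this
    apply hφ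
    rw [hφb, map_one]
  exact key x hx hb
end

section
/- Let p be a prime, r a positive integer, and q = p^r. Then a Sylow p-subgroup of PSL(2, F_q) is isomorphic to the elementary abelian group (C_p)^r. -/
/-!
The image `U` of the upper unitriangular matrices `[1, t; 0, 1]` in `PSL(2, F)` is a copy of the
additive group of `F`, since no such matrix with `t ≠ 0` is scalar. Hence `|U| = q`, while
`|PSL(2, F)|` divides `|GL(2, F)| = q (q² - 1) (q - 1)`, whose second factor is prime to `p`.
So `U` is a Sylow `p`-subgroup, every Sylow `p`-subgroup is isomorphic to it, and `F` is an
`r`-dimensional vector space over `ZMod p`.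
-/

open Matrix

theorem Nat.not_dvd_sub_one_of_dvd {p n : ℕ} (hp : p ≠ 1) (hn : n ≠ 0) (h : p ∣ n) :
    ¬ p ∣ n - 1 := fun h' =>
  hp <| Nat.dvd_one.mp <| by
    simpa [Nat.sub_sub_self (Nat.one_le_iff_ne_zero.mpr hn)] using Nat.dvd_sub h h'

theorem ZMod.nonempty_addEquiv_fin_pi_of_card_eq {p r : ℕ} [Fact p.Prime] {V : Type*}
    [AddCommGroup V] [Module (ZMod p) V] [Finite V] (h : Nat.card V = p ^ r) :
    Nonempty (V ≃+ (Fin r → ZMod p)) := by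
  have hrank : Module.finrank (ZMod p) V = r := by
    rw [Module.natCard_eq_pow_finrank (K := ZMod p), Nat.card_zmod] at h
    exact Nat.pow_right_injective (Fact.out : p.Prime).two_le h
  exact ⟨(Module.finBasisOfFinrankEq (ZMod p) V hrank).equivFun.toAddEquiv⟩

theorem Matrix.card_GL_fin_two_field {F : Type*} [Field F] [Fintype F] :
    Nat.card (GL (Fin 2) F) =
      Fintype.card F * ((Fintype.card F ^ 2 - 1) * (Fintype.card F - 1)) := by
  have h : Fintype.card F ^ 2 - Fintype.card F = Fintype.card F * (Fintype.card F - 1) := by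
    rw [Nat.mul_sub_one, sq]
  rw [card_GL_field, Fin.prod_univ_two]
  simp only [Fin.val_zero, Fin.val_one, pow_zero, pow_one, h]
  ring

namespace Matrix.SpecialLinearGroup

theorem card_dvd_card_GL {n R : Type*} [DecidableEq n] [Fintype n] [CommRing R] :
    Nat.card (SpecialLinearGroup n R) ∣ Nat.card (GL n R) :=
  Subgroup.card_dvd_of_injective toGL fun _ _ h => Subtype.ext (congrArg Units.val h)

variable {R : Type*} [CommRing R]

def upperRightHom : Multiplicative R →* SpecialLinearGroup (Fin 2) R where
  toFun t := (⟨!![1, t.toAdd; 0, 1], by simp [det_fin_two_of]⟩ : SpecialLinearGroup (Fin 2) R)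
  map_one' := by ext i j; fin_cases i <;> fin_cases j <;> simp
  map_mul' s t := Subtype.ext <| by
    change !![1, (s * t).toAdd; 0, 1] = !![1, s.toAdd; 0, 1] * !![1, t.toAdd; 0, 1]
    simp [add_comm]

theorem injective_mk_comp_upperRightHom :
    Function.Injective
      ((QuotientGroup.mk' (Subgroup.center (SpecialLinearGroup (Fin 2) R))).comp
        upperRightHom) := by
  rw [← MonoidHom.ker_eq_bot_iff, eq_bot_iff]
  intro t ht
  obtain ⟨c, -, hc⟩ := mem_center_iff.mp ((QuotientGroup.eq_one_iff _).mp ht)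
  have h01 := congr_fun₂ hc 0 1
  simp [upperRightHom] at h01
  exact Multiplicative.toAdd.injective h01.symm

end Matrix.SpecialLinearGroup

abbrev PSL2 (F : Type*) [Field F] :=
  SpecialLinearGroup (Fin 2) F ⧸ Subgroup.center (SpecialLinearGroup (Fin 2) F)

namespace PSL2

variable (F : Type*) [Field F]

def upperRightHom : Multiplicative F →* PSL2 F :=
  (QuotientGroup.mk' _).comp SpecialLinearGroup.upperRightHom

def unipotent : Subgroup (PSL2 F) := (upperRightHom F).range

noncomputable def unipotentEquiv : Multiplicative F ≃* unipotent F :=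
  MonoidHom.ofInjective SpecialLinearGroup.injective_mk_comp_upperRightHom

theorem card_unipotent : Nat.card (unipotent F) = Nat.card F :=
  (Nat.card_congr (unipotentEquiv F).toEquiv).symm.trans (Nat.card_congr Multiplicative.toAdd)

theorem not_dvd_index_unipotent [Fintype F] {p : ℕ} (hp : p.Prime)
    (hpF : p ∣ Fintype.card F) : ¬ p ∣ (unipotent F).index := by
  set q := Fintype.card F
  have hq : q ≠ 0 := Fintype.card_ne_zero
  have hindex : (unipotent F).index ∣ (q ^ 2 - 1) * (q - 1) := by
    have hcard := Subgroup.card_mul_index (unipotent F)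
    rw [card_unipotent, Nat.card_eq_fintype_card] at hcard
    rw [← Nat.mul_dvd_mul_iff_left (Nat.pos_of_ne_zero hq), ← card_GL_fin_two_field, hcard]
    exact (Subgroup.card_quotient_dvd_card _).trans SpecialLinearGroup.card_dvd_card_GL
  intro h
  rcases hp.dvd_mul.mp (h.trans hindex) with h' | h'
  · exact Nat.not_dvd_sub_one_of_dvd hp.ne_one (pow_ne_zero 2 hq) (hpF.pow two_ne_zero) h'
  · exact Nat.not_dvd_sub_one_of_dvd hp.ne_one hq hpF h'

end PSL2

/-- a Sylow `p`-subgroup of `PSL(2, F_q)`, `q = p^r`, is isomorphic to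
the elementary abelian group `(C_p)^r`. -/
theorem stmt10 (p r : ℕ) (hp : p.Prime) (hr : 0 < r)
    (F : Type*) [Field F] [Fintype F] (hF : Fintype.card F = p ^ r)
    (P : Sylow p (Matrix.SpecialLinearGroup (Fin 2) F ⧸
      Subgroup.center (Matrix.SpecialLinearGroup (Fin 2) F))) :
    Nonempty (P.toSubgroup ≃* (Fin r → Multiplicative (ZMod p))) := by
  have : Fact p.Prime := ⟨hp⟩
  have hcard : Nat.card F = p ^ r := Nat.card_eq_fintype_card.trans hF
  have hU : IsPGroup p (PSL2.unipotent F) :=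
    IsPGroup.of_card ((PSL2.card_unipotent F).trans hcard)
  let U : Sylow p (PSL2 F) :=
    hU.toSylow (PSL2.not_dvd_index_unipotent F hp (hF ▸ dvd_pow_self p hr.ne'))
  have : CharP F p := charP_of_card_eq_prime_pow hF
  let := ZMod.algebra F p
  obtain ⟨e⟩ := ZMod.nonempty_addEquiv_fin_pi_of_card_eq (V := F) hcard
  exact ⟨(Sylow.equiv P U).trans <| (PSL2.unipotentEquiv F).symm.trans <|
    e.toMultiplicative.trans (MulEquiv.piMultiplicative _)⟩
end
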